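/- For every z ∈ ℂ∖(−∞,0], the segment from 1 to z lies in ℂ∖(−∞,0] and (z−1)·∫₀¹ logΓ(1 + t(z−1)) dt = ((z−1)/2)·ln(2π) − z(z−1)/2 + (z−1)·logΓ(z) − logG(1+(z−1)), where logΓ is the principal branch of log-Gamma and logG is the logarithm of the Barnes G-function defined in the context. -/

import Mathlib

open Complex Filter

noncomputable section

/-- Principal branch of log-Gamma on `ℂ ∖ (-∞,0]`. -/
def logGammaP (z : ℂ) : ℂ :=
  -(Real.eulerMascheroniConstant : ℂ) * z - Complex.log z +
    ∑' k : ℕ, (z / ((k : ℂ) + 1) - Complex.log (1 + z / ((k : ℂ) + 1)))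

/-- Complex logarithm of the Barnes `G`-function at `1 + w`, for `w ∈ ℂ ∖ (-∞,-1]`. -/
def clogBarnesG1p (w : ℂ) : ℂ :=
  w / 2 * (Real.log (2 * Real.pi) : ℂ) -
    (w + w ^ 2 * (1 + (Real.eulerMascheroniConstant : ℂ))) / 2 +
    ∑' k : ℕ, (((k : ℂ) + 1) * Complex.log (1 + w / ((k : ℂ) + 1)) - w + w ^ 2 / (2 * ((k : ℂ) + 1)))

/-!
Both sides vanish at `z = 1`, so it suffices that
`F y = (y - 1)/2 · ln 2π - y (y - 1)/2 + (y - 1) logΓ y - logG y` has derivative `logΓ` on the slit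
plane, and to integrate `F'` along the segment `[1, z]`, which stays in the slit plane by
star-convexity. Differentiating the defining series termwise gives `logΓ' y = -γ - 1/y + H y` and
`(logG)'(1 + w) = ½ ln 2π - ½ - (1 + γ) w + w H w`, where `H w = ∑ (1/(n+1) - 1/(n+1+w))`; the
recurrence `H (w + 1) = H w + 1/(1 + w)` then cancels everything in `F'` except `logΓ`.
Termwise differentiation is justified on a convex neighbourhood of the segment `[0, w]` (all terms
vanish at `0`) that stays a fixed distance away from the poles `-(n+1)`, where the differentiated
terms are `O(1/n²)`.
-/

open Metric Set Topology

lemma one_add_mem_slitPlane {z : ℂ} (hz : z ∈ slitPlane) : 1 + z ∈ slitPlane := by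
  rw [mem_slitPlane_iff] at hz ⊢
  simp only [add_re, one_re, add_im, one_im, zero_add]
  rcases hz with h | h
  · exact Or.inl (by linarith)
  · exact Or.inr h

lemma neg_natCast_notMem_slitPlane (n : ℕ) : -(n : ℂ) ∉ slitPlane := by
  simp [mem_slitPlane_iff]

lemma natSucc_add_ne_zero {x : ℂ} (hx : 1 + x ∈ slitPlane) (n : ℕ) : (n + 1 : ℂ) + x ≠ 0 := by
  intro h
  apply neg_natCast_notMem_slitPlane n
  convert hx using 1
  linear_combination -h

lemma one_add_ofReal_mul_mem_slitPlane {x : ℂ} (hx : 1 + x ∈ slitPlane) {t : ℝ} (ht₀ : 0 ≤ t)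
    (ht₁ : t ≤ 1) : 1 + t * x ∈ slitPlane := by
  simpa [real_smul] using starConvex_one_slitPlane.add_smul_mem hx ht₀ ht₁

lemma one_add_div_natSucc_mem_slitPlane {x : ℂ} (hx : 1 + x ∈ slitPlane) (n : ℕ) :
    1 + x / (n + 1) ∈ slitPlane := by
  have h := one_add_ofReal_mul_mem_slitPlane hx (t := ((n : ℝ) + 1)⁻¹) (by positivity)
    (inv_le_one_of_one_le₀ (by simp))
  push_cast at h
  rwa [inv_mul_eq_div] at h

lemma hasDerivAt_log_one_add_div {a x : ℂ} (ha : a ≠ 0) (hx : 1 + x / a ∈ slitPlane) :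
    HasDerivAt (fun y => log (1 + y / a)) (a + x)⁻¹ x := by
  have hax : a + x ≠ 0 := by
    intro h
    apply slitPlane_ne_zero hx
    rw [one_add_div ha, h, zero_div]
  refine ((((hasDerivAt_id' x).div_const a).const_add 1).clog hx).congr_deriv ?_
  rw [one_add_div ha]
  field_simp

lemma hasDerivAt_logGammaP_summand (n : ℕ) {x : ℂ} (hx : 1 + x ∈ slitPlane) :
    HasDerivAt (fun y => y / (n + 1) - log (1 + y / (n + 1)))
      ((n + 1 : ℂ)⁻¹ - ((n + 1 : ℂ) + x)⁻¹) x := by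
  refine (((hasDerivAt_id' x).div_const (n + 1 : ℂ)).fun_sub
    (hasDerivAt_log_one_add_div n.cast_add_one_ne_zero
      (one_add_div_natSucc_mem_slitPlane hx n))).congr_deriv ?_
  rw [one_div]

lemma hasDerivAt_clogBarnesG1p_summand (n : ℕ) {x : ℂ} (hx : 1 + x ∈ slitPlane) :
    HasDerivAt (fun y => (n + 1) * log (1 + y / (n + 1)) - y + y ^ 2 / (2 * (n + 1)))
      (x * ((n + 1 : ℂ)⁻¹ - ((n + 1 : ℂ) + x)⁻¹)) x := by
  have hn : (n + 1 : ℂ) ≠ 0 := n.cast_add_one_ne_zero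
  have hnx := natSucc_add_ne_zero hx n
  refine ((((hasDerivAt_log_one_add_div hn (one_add_div_natSucc_mem_slitPlane hx n)).const_mul
    (n + 1 : ℂ)).fun_sub (hasDerivAt_id' x)).fun_add
    ((hasDerivAt_pow 2 x).div_const (2 * (n + 1 : ℂ)))).congr_deriv ?_
  field_simp
  ring

lemma norm_inv_sub_inv_add_le {a x : ℂ} {R r : ℝ} (ha : a ≠ 0) (hr : 0 < r) (hx : ‖x‖ ≤ R)
    (hax : r ≤ ‖a + x‖) : ‖a⁻¹ - (a + x)⁻¹‖ ≤ R * (1 + R / r) / ‖a‖ ^ 2 := by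
  have hax0 : a + x ≠ 0 := norm_pos_iff.mp (hr.trans_le hax)
  have hR : 0 ≤ R := (norm_nonneg x).trans hx
  have ha_le : ‖a‖ ≤ (1 + R / r) * ‖a + x‖ := by
    have h1 : ‖a‖ ≤ ‖a + x‖ + ‖x‖ := by simpa using norm_sub_le (a + x) x
    have h2 : R ≤ R / r * ‖a + x‖ := by
      rw [div_mul_eq_mul_div, le_div_iff₀ hr]; exact mul_le_mul_of_nonneg_left hax hR
    linarith
  have hdiff : a⁻¹ - (a + x)⁻¹ = x / (a * (a + x)) := by field_simp; ring
  rw [hdiff, norm_div, norm_mul, div_le_div_iff₀ (by positivity) (by positivity)]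
  calc ‖x‖ * ‖a‖ ^ 2 = ‖x‖ * ‖a‖ * ‖a‖ := by ring
    _ ≤ R * ((1 + R / r) * ‖a + x‖) * ‖a‖ := by gcongr
    _ = R * (1 + R / r) * (‖a‖ * ‖a + x‖) := by ring

lemma exists_convex_nbhd_of_one_add_mem_slitPlane {w : ℂ} (hw : 1 + w ∈ slitPlane) :
    ∃ U : Set ℂ, IsOpen U ∧ Convex ℝ U ∧ 0 ∈ U ∧ w ∈ U ∧ ∃ R r : ℝ, 0 < r ∧
      ∀ x ∈ U, 1 + x ∈ slitPlane ∧ ‖x‖ ≤ R ∧ ∀ n : ℕ, r ≤ ‖(n + 1 : ℂ) + x‖ := by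
  set S := segment ℝ 0 w
  have hS : S = (fun t : ℝ => (t : ℂ) * w) '' Icc 0 1 := by
    simp [S, segment_eq_image', real_smul]
  have hSV : S ⊆ (1 + ·) ⁻¹' slitPlane := by
    rw [hS]
    rintro _ ⟨t, ht, rfl⟩
    exact one_add_ofReal_mul_mem_slitPlane hw ht.1 ht.2
  obtain ⟨δ, hδ, hδV⟩ := (hS ▸ isCompact_Icc.image (by fun_prop)).exists_thickening_subset_open
    (isOpen_slitPlane.preimage (continuous_const.add continuous_id)) hSV
  have hSw : S ⊆ closedBall 0 ‖w‖ :=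
    (convex_closedBall 0 ‖w‖).segment_subset (by simp) (by simp)
  refine ⟨thickening (δ / 2) S, isOpen_thickening, (convex_segment 0 w).thickening _,
    self_subset_thickening (by positivity) _ (left_mem_segment ℝ 0 w),
    self_subset_thickening (by positivity) _ (right_mem_segment ℝ 0 w),
    ‖w‖ + δ / 2, δ / 2, by positivity,
    fun x hx => ⟨hδV (thickening_mono (by linarith) _ hx), ?_, ?_⟩⟩
  · obtain ⟨p, hp, hxp⟩ := mem_thickening_iff.mp hx
    have := mem_closedBall_zero_iff.mp (hSw hp)
    have := norm_le_norm_add_norm_sub' x p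
    rw [dist_eq_norm] at hxp
    linarith
  · intro n
    by_contra! h
    have hmem : -(n + 1 : ℂ) ∈ thickening δ S := by
      rw [← add_halves δ]
      refine thickening_thickening_subset (δ / 2) (δ / 2) S (mem_thickening_iff.mpr ⟨x, hx, ?_⟩)
      rwa [dist_eq_norm, ← norm_neg, neg_sub, sub_neg_eq_add, add_comm]
    apply neg_natCast_notMem_slitPlane n
    simpa using hδV hmem

lemma summable_div_natSucc_sq (C : ℝ) : Summable fun n : ℕ => C / ((n : ℝ) + 1) ^ 2 := by
  have h := (summable_nat_add_iff 1).mpr (Real.summable_one_div_nat_pow.mpr one_lt_two)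
  simpa [div_eq_mul_inv] using h.mul_left C

lemma norm_inv_natSucc_sub_inv_le {x : ℂ} {R r : ℝ} (hr : 0 < r) (hx : ‖x‖ ≤ R) {n : ℕ}
    (hnx : r ≤ ‖(n + 1 : ℂ) + x‖) :
    ‖(n + 1 : ℂ)⁻¹ - ((n + 1 : ℂ) + x)⁻¹‖ ≤ R * (1 + R / r) / ((n : ℝ) + 1) ^ 2 := by
  have hn : ‖(n + 1 : ℂ)‖ = (n : ℝ) + 1 := by exact_mod_cast Complex.norm_natCast (n + 1)
  simpa only [hn] using norm_inv_sub_inv_add_le n.cast_add_one_ne_zero hr hx hnx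

theorem hasDerivAt_tsum_of_one_add_mem_slitPlane {g g' : ℕ → ℂ → ℂ} {w : ℂ}
    (hw : 1 + w ∈ slitPlane) (hg : ∀ n x, 1 + x ∈ slitPlane → HasDerivAt (g n) (g' n x) x)
    (hg₀ : ∀ n, g n 0 = 0)
    (hg' : ∀ R r : ℝ, 0 < r → ∃ C, ∀ (n : ℕ) x, ‖x‖ ≤ R → r ≤ ‖(n + 1 : ℂ) + x‖ →
      ‖g' n x‖ ≤ C / ((n : ℝ) + 1) ^ 2) :
    HasDerivAt (fun y => ∑' n, g n y) (∑' n, g' n w) w := by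
  obtain ⟨U, hUo, hUc, h0U, hwU, R, r, hr, hU⟩ := exists_convex_nbhd_of_one_add_mem_slitPlane hw
  obtain ⟨C, hC⟩ := hg' R r hr
  exact hasDerivAt_tsum_of_isPreconnected (summable_div_natSucc_sq C) hUo hUc.isPreconnected
    (fun n x hx => hg n x (hU x hx).1) (fun n x hx => hC n x (hU x hx).2.1 ((hU x hx).2.2 n))
    h0U (by simp [hg₀]) hwU

/-- The harmonic number `H_z = ψ(z + 1) + γ` at a complex argument. -/
def complexHarmonic (z : ℂ) : ℂ := ∑' n : ℕ, ((n + 1 : ℂ)⁻¹ - ((n + 1 : ℂ) + z)⁻¹)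

lemma summable_complexHarmonic {w : ℂ} (hw : 1 + w ∈ slitPlane) :
    Summable fun n : ℕ => (n + 1 : ℂ)⁻¹ - ((n + 1 : ℂ) + w)⁻¹ := by
  obtain ⟨U, -, -, -, hwU, R, r, hr, hU⟩ := exists_convex_nbhd_of_one_add_mem_slitPlane hw
  exact .of_norm_bounded (summable_div_natSucc_sq _)
    fun n => norm_inv_natSucc_sub_inv_le hr (hU w hwU).2.1 ((hU w hwU).2.2 n)

lemma tsum_sub_succ {E : Type*} [AddCommGroup E] [TopologicalSpace E] [IsTopologicalAddGroup E]
    [T2Space E] {c : ℕ → E} (hs : Summable fun n => c n - c (n + 1))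
    (hc : Tendsto c atTop (𝓝 0)) : ∑' n, (c n - c (n + 1)) = c 0 := by
  refine tendsto_nhds_unique hs.hasSum.tendsto_sum_nat ?_
  simp_rw [Finset.sum_range_sub']
  simpa using (tendsto_const_nhds (x := c 0)).sub hc

lemma complexHarmonic_add_one {w : ℂ} (hw : 1 + w ∈ slitPlane) :
    complexHarmonic (w + 1) = complexHarmonic w + (1 + w)⁻¹ := by
  set c : ℕ → ℂ := fun n => ((n + 1 : ℂ) + w)⁻¹
  have hw' : 1 + (w + 1) ∈ slitPlane := by
    simpa [add_comm, add_left_comm] using one_add_mem_slitPlane hw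
  have hstep : ∀ n : ℕ, ((n + 1 : ℂ)⁻¹ - ((n + 1 : ℂ) + (w + 1))⁻¹)
      - ((n + 1 : ℂ)⁻¹ - ((n + 1 : ℂ) + w)⁻¹) = c n - c (n + 1) := by
    intro n
    simp only [c]
    push_cast
    ring_nf
  have hc : Tendsto c atTop (𝓝 0) := by
    refine tendsto_inv₀_cobounded.comp ((tendsto_add_const_cobounded w).comp ?_)
    exact_mod_cast (tendsto_natCast_atTop_cobounded (α := ℂ)).comp (tendsto_add_atTop_nat 1)
  have hs := summable_complexHarmonic hw
  have hs' := summable_complexHarmonic hw'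
  have htel := tsum_sub_succ ((hs'.sub hs).congr hstep) hc
  rw [← tsum_congr hstep, hs'.tsum_sub hs] at htel
  unfold complexHarmonic
  rw [← sub_eq_iff_eq_add', htel]
  simp [c, add_comm]

theorem hasDerivAt_logGammaP {z : ℂ} (hz : z ∈ slitPlane) :
    HasDerivAt logGammaP (-Real.eulerMascheroniConstant - z⁻¹ + complexHarmonic z) z := by
  have hseries := hasDerivAt_tsum_of_one_add_mem_slitPlane (one_add_mem_slitPlane hz)
    (fun n x hx => hasDerivAt_logGammaP_summand n hx) (by simp)
    fun R r hr => ⟨_, fun n x hx hnx => norm_inv_natSucc_sub_inv_le hr hx hnx⟩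
  exact (((hasDerivAt_id' z).const_mul _).fun_sub (hasDerivAt_log hz)).fun_add hseries
    |>.congr_deriv (by simp [complexHarmonic])

theorem hasDerivAt_clogBarnesG1p {w : ℂ} (hw : 1 + w ∈ slitPlane) :
    HasDerivAt clogBarnesG1p (Real.log (2 * Real.pi) / 2
      - (1 + 2 * w * (1 + Real.eulerMascheroniConstant)) / 2 + w * complexHarmonic w) w := by
  have hseries := hasDerivAt_tsum_of_one_add_mem_slitPlane hw
    (fun n x hx => hasDerivAt_clogBarnesG1p_summand n hx) (by simp)
    fun R r hr => ⟨R * (R * (1 + R / r)), fun n x hx hnx => by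
      rw [norm_mul, mul_div_assoc]
      exact mul_le_mul hx (norm_inv_natSucc_sub_inv_le hr hx hnx) (norm_nonneg _)
        ((norm_nonneg x).trans hx)⟩
  refine ((((hasDerivAt_id' w).div_const 2).mul_const _).fun_sub
    (((hasDerivAt_id' w).fun_add ((hasDerivAt_pow 2 w).mul_const _)).div_const 2)).fun_add hseries
    |>.congr_deriv ?_
  rw [tsum_mul_left, complexHarmonic]
  push_cast
  ring

def logGammaPrimitive (y : ℂ) : ℂ :=
  (y - 1) / 2 * (Real.log (2 * Real.pi) : ℂ) - y * (y - 1) / 2 + (y - 1) * logGammaP y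
    - clogBarnesG1p (y - 1)

lemma logGammaPrimitive_one : logGammaPrimitive 1 = 0 := by
  simp [logGammaPrimitive, clogBarnesG1p]

theorem hasDerivAt_logGammaPrimitive {z : ℂ} (hz : z ∈ slitPlane) :
    HasDerivAt logGammaPrimitive (logGammaP z) z := by
  have hz' : 1 + (z - 1) ∈ slitPlane := by rwa [add_sub_cancel]
  have hH : complexHarmonic z = complexHarmonic (z - 1) + z⁻¹ := by
    simpa using complexHarmonic_add_one hz'
  have hG := (hasDerivAt_clogBarnesG1p hz').comp z ((hasDerivAt_id' z).sub_const 1)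
  refine (((((hasDerivAt_id' z).sub_const 1).div_const 2).mul_const _).fun_sub
    (((hasDerivAt_id' z).fun_mul ((hasDerivAt_id' z).sub_const 1)).div_const 2)).fun_add
    (((hasDerivAt_id' z).sub_const 1).fun_mul (hasDerivAt_logGammaP hz)) |>.fun_sub hG
    |>.congr_deriv ?_
  rw [hH]
  field_simp [slitPlane_ne_zero hz]
  ring

/-- the integral of log-Gamma along the segment from `1` to `z`. -/
theorem logGamma_integral_identity (z : ℂ) (hz : z ∈ Complex.slitPlane) :
    (∀ t ∈ Set.Icc (0 : ℝ) 1, 1 + (t : ℂ) * (z - 1) ∈ Complex.slitPlane) ∧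
    (z - 1) * ∫ t in (0 : ℝ)..1, logGammaP (1 + (t : ℂ) * (z - 1)) =
      (z - 1) / 2 * (Real.log (2 * Real.pi) : ℂ) - z * (z - 1) / 2 +
        (z - 1) * logGammaP z - clogBarnesG1p (z - 1) := by
  have hseg : ∀ t ∈ Icc (0 : ℝ) 1, 1 + (t : ℂ) * (z - 1) ∈ slitPlane := fun t ht =>
    one_add_ofReal_mul_mem_slitPlane (by rwa [add_sub_cancel]) ht.1 ht.2
  refine ⟨hseg, ?_⟩
  have hcont : ContinuousOn (fun t : ℝ => logGammaP (1 + t • (z - 1))) (Icc 0 1) := fun t ht =>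
    ((hasDerivAt_logGammaP (real_smul ▸ hseg t ht)).continuousAt.comp
      (by fun_prop)).continuousWithinAt
  have hFTC := intervalIntegral.integral_unitInterval_deriv_eq_sub hcont
    fun t ht => real_smul ▸ hasDerivAt_logGammaPrimitive (hseg t ht)
  simp only [real_smul, smul_eq_mul, add_sub_cancel, logGammaPrimitive_one, sub_zero] at hFTC
  exact hFTC
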